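/- Let S be a weakly right reversible pomonoid (Ss ∩ (St] ≠ ∅ for all s, t ∈ S). Then a right S-poset is almost weakly po-flat if and only if it is weakly po-flat; in particular, Condition (W') is equivalent to Condition (W) for S-posets over such S. -/
import Mathlib


/-- An `S`-tossing witnessing `a ⊗ b ≤ a' ⊗ b'` in `A ⊗_S B`, where `B ⊆ S` is
a left `S`-subposet of `S`: there are `c₁,…,cₙ ∈ A`, `sᵢ, tᵢ ∈ S` and
`u₀ = b, u₁, …, uₙ = b' ∈ B` with
`a ≤ c₁s₁`, `cᵢtᵢ ≤ c_{i+1}s_{i+1}`, `cₙtₙ ≤ a'` and `sᵢu_{i-1} ≤ tᵢuᵢ`. -/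
def TossLe {S A : Type} [Monoid S] [PartialOrder S] [PartialOrder A]
    (act : A → S → A) (B : Set S) (a : A) (b : S) (a' : A) (b' : S) : Prop :=
  ∃ n : ℕ, ∃ c : Fin (n + 1) → A, ∃ s t : Fin (n + 1) → S, ∃ u : Fin (n + 2) → S,
    u 0 = b ∧ u (Fin.last (n + 1)) = b' ∧ (∀ i, u i ∈ B) ∧
    a ≤ act (c 0) (s 0) ∧
    (∀ i : Fin n, act (c i.castSucc) (t i.castSucc) ≤ act (c i.succ) (s i.succ)) ∧
    act (c (Fin.last n)) (t (Fin.last n)) ≤ a' ∧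
    (∀ i : Fin (n + 1), s i * u i.castSucc ≤ t i * u i.succ)

/-- Principal weak po-flatness via tossings: `as ≤ a's` implies
`a ⊗ s ≤ a' ⊗ s` in `A ⊗_S Ss`. -/
def PWPoFlat {S A : Type} [Monoid S] [PartialOrder S] [PartialOrder A]
    (act : A → S → A) : Prop :=
  ∀ (a a' : A) (s : S), act a s ≤ act a' s →
    TossLe act {r : S | ∃ w : S, r = w * s} a s a' s

/-- Condition (W). -/
def CondW {S A : Type} [Monoid S] [PartialOrder S] [PartialOrder A]
    (act : A → S → A) : Prop :=
  ∀ (a a' : A) (x y : S), act a x ≤ act a' y →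
    ∃ (a'' : A) (p q : S), (∃ w : S, p = w * x) ∧ (∃ w : S, q = w * y) ∧
      p ≤ q ∧ act a x ≤ act a'' p ∧ act a'' q ≤ act a' y

/-- Condition (W'): same conclusion as (W) under the extra hypothesis
`Sx ∩ (Sy] ≠ ∅`. -/
def CondW' {S A : Type} [Monoid S] [PartialOrder S] [PartialOrder A]
    (act : A → S → A) : Prop :=
  ∀ (a a' : A) (x y : S), act a x ≤ act a' y →
    (∃ w w' : S, w * x ≤ w' * y) →
    ∃ (a'' : A) (p q : S), (∃ w : S, p = w * x) ∧ (∃ w : S, q = w * y) ∧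
      p ≤ q ∧ act a x ≤ act a'' p ∧ act a'' q ≤ act a' y

/-- over a weakly right reversible pomonoid (`Ss ∩ (St] ≠ ∅` for
all `s, t`), a right `S`-poset is almost weakly po-flat iff it is weakly
po-flat; in particular Condition (W') is equivalent to Condition (W). -/
theorem weakly_right_reversible_awpf_iff_wpf
    {S : Type} [Monoid S] [PartialOrder S]
    [CovariantClass S S (· * ·) (· ≤ ·)]
    [CovariantClass S S (Function.swap (· * ·)) (· ≤ ·)]
    (hrev : ∀ s t : S, ∃ w w' : S, w * s ≤ w' * t) :
    ∀ (A : Type) [PartialOrder A] (act : A → S → A),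
      (∀ (a : A) (s t : S), act (act a s) t = act a (s * t)) →
      (∀ a : A, act a 1 = a) →
      (∀ (s : S) {a b : A}, a ≤ b → act a s ≤ act b s) →
      (∀ (a : A) {s t : S}, s ≤ t → act a s ≤ act a t) →
      (((PWPoFlat act ∧ CondW' act) ↔ (PWPoFlat act ∧ CondW act)) ∧
        (CondW' act ↔ CondW act)) := by
  intro A _ act _ _ _ _
  have h : CondW' act ↔ CondW act := by
    constructor
    · intro h a a' x y hle
      exact h a a' x y hle (hrev x y)
    · intro h a a' x y hle _
      exact h a a' x y hle
  exact ⟨and_congr_right fun _ => h, h⟩
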